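/- Let R be a commutative ring, M a finitely presented R-module, and u : R^m → M an R-linear map. Then the set { p ∈ Spec R : the induced map κ(p)^m → M ⊗_R κ(p) is surjective } is open in Spec R. -/

import Mathlib

noncomputable abbrev residueField {R : Type u} [CommRing R] (p : PrimeSpectrum R) : Type u :=
  IsLocalRing.ResidueField (Localization.AtPrime p.asIdeal)

/-! Tensoring is right exact, so `u ⊗ κ(p)` is surjective iff `coker u ⊗ κ(p) = 0`; for finite
`coker u` Nakayama's lemma turns this into `p ∉ Supp (coker u)`, and the support of a finite
module is closed. -/

open TensorProduct

namespace LinearMap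

variable {R : Type*} [CommRing R] {M N : Type*} [AddCommGroup M] [Module R M]
  [AddCommGroup N] [Module R N]

theorem lTensor_surjective_iff_subsingleton_cokernel (Q : Type*) [AddCommGroup Q] [Module R Q]
    (u : N →ₗ[R] M) :
    Function.Surjective (u.lTensor Q) ↔ Subsingleton (Q ⊗[R] (M ⧸ range u)) := by
  have hq : Function.Surjective ((range u).mkQ.lTensor Q) :=
    lTensor_surjective Q (range u).mkQ_surjective
  rw [surjective_iff_eq_zero_of_exact
    (lTensor_exact Q (exact_map_mkQ_range u) (range u).mkQ_surjective)]
  refine ⟨fun h ↦ subsingleton_of_forall_eq 0 fun y ↦ ?_, fun _ ↦ Subsingleton.elim _ _⟩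
  obtain ⟨x, rfl⟩ := hq y
  rw [h, zero_apply]

theorem baseChange_surjective_iff_subsingleton_cokernel (A : Type*) [CommRing A] [Algebra R A]
    (u : N →ₗ[R] M) :
    Function.Surjective (u.baseChange A) ↔ Subsingleton (A ⊗[R] (M ⧸ range u)) := by
  rw [baseChange_eq_ltensor]
  exact lTensor_surjective_iff_subsingleton_cokernel A u

theorem setOf_baseChange_residueField_surjective_eq_compl_support [Module.Finite R M]
    (u : N →ₗ[R] M) :
    {p : PrimeSpectrum R | Function.Surjective (u.baseChange p.asIdeal.ResidueField)} =
      (Module.support R (M ⧸ range u))ᶜ := by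
  ext p
  rw [Set.mem_ofPred_eq, Set.mem_compl_iff,
    Module.mem_support_iff_nontrivial_residueField_tensorProduct, not_nontrivial_iff_subsingleton]
  exact baseChange_surjective_iff_subsingleton_cokernel _ u

end LinearMap

/-- For a finitely presented module `M` over a commutative ring `R` and a linear map
`u : R^m → M`, the locus of primes `p` where the induced map
`κ(p)^m → M ⊗_R κ(p)` is surjective is open in `Spec R`. -/
theorem isOpen_surjective_locus
    (R : Type u) [CommRing R] (M : Type u) [AddCommGroup M] [Module R M]
    [Module.FinitePresentation R M] (m : ℕ) (u : (Fin m → R) →ₗ[R] M) :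
    IsOpen {p : PrimeSpectrum R |
      Function.Surjective (LinearMap.baseChange (residueField p) u)} := by
  rw [LinearMap.setOf_baseChange_residueField_surjective_eq_compl_support u]
  exact Module.isClosed_support.isOpen_compl
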